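/- arXiv:0912.0569 — 2 statements merged into one kernel-verified Lean document; each statement's English description precedes it below -/
import Mathlib

section
/- Let X be a nilpotent operator on ℂ^N with X^n = 0 and Jordan type ν, and let λ be the conjugate partition of ν. If there exists an n-step flag 0 = V_0 ⊆ V_1 ⊆ ⋯ ⊆ V_n = ℂ^N with dim(V_i/V_{i−1}) = μ_i and X V_i ⊆ V_{i−1} for all i, then for every k, μ_1 + ⋯ + μ_k ≤ λ_1 + ⋯ + λ_k. -/
/-!
A flag with `X Vᵢ ⊆ Vᵢ₋₁` forces `Vₖ ⊆ ker Xᵏ`, and the two partial sums in the statement are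
exactly `dim Vₖ` and `dim ker Xᵏ`.
-/

open Finset

theorem Fin.sum_filter_val_lt_induction {M : Type*} [AddCommMonoid M] {n : ℕ} (μ : Fin n → M)
    (d : Fin (n + 1) → M) (base : d 0 = 0) (step : ∀ i : Fin n, d i.succ = d i.castSucc + μ i)
    (k : Fin (n + 1)) : ∑ i ∈ univ.filter (fun i : Fin n => (i : ℕ) < k), μ i = d k := by
  induction k using Fin.induction with
  | zero => simp [base]
  | succ i ih =>
    have hfilter : univ.filter (fun j : Fin n => (j : ℕ) < i.succ) =
        insert i (univ.filter (fun j : Fin n => (j : ℕ) < i.castSucc)) := by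
      ext j
      simp only [mem_filter, mem_univ, true_and, mem_insert, Fin.val_succ, Fin.val_castSucc,
        Fin.ext_iff]
      omega
    rw [hfilter, sum_insert (by simp), ih, step, add_comm]

theorem Submodule.le_ker_pow_of_map_le {R M : Type*} [Semiring R] [AddCommMonoid M] [Module R M]
    {n : ℕ} (f : Module.End R M) (V : Fin (n + 1) → Submodule R M) (hV0 : V 0 = ⊥)
    (hX : ∀ i : Fin n, (V i.succ).map f ≤ V i.castSucc) (k : Fin (n + 1)) :
    V k ≤ LinearMap.ker (f ^ (k : ℕ)) := by
  induction k using Fin.induction with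
  | zero => simp [hV0]
  | succ i ih =>
    intro x hx
    have hfx : (f ^ (i : ℕ)) (f x) = 0 := ih (hX i (mem_map_of_mem hx))
    rwa [LinearMap.mem_ker, Fin.val_succ, pow_succ, Module.End.mul_apply]

theorem springer_fibre_weight_dominance_general (n N : ℕ)
    (f : Module.End ℂ (Fin N → ℂ))
    (lam : ℕ → ℕ)
    (hlam : ∀ k : ℕ, Module.finrank ℂ (LinearMap.ker (f ^ (k + 1))) =
      Module.finrank ℂ (LinearMap.ker (f ^ k)) + lam k)
    (V : Fin (n + 1) → Submodule ℂ (Fin N → ℂ))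
    (hV0 : V 0 = ⊥)
    (μ : Fin n → ℕ)
    (hμ : ∀ i : Fin n, Module.finrank ℂ (V i.succ) =
      Module.finrank ℂ (V i.castSucc) + μ i)
    (hX : ∀ i : Fin n, Submodule.map f (V i.succ) ≤ V i.castSucc) :
    ∀ k : ℕ, k ≤ n →
      ∑ i ∈ Finset.univ.filter (fun i : Fin n => (i : ℕ) < k), μ i ≤
        ∑ i ∈ Finset.range k, lam i := by
  intro k hk
  let k' : Fin (n + 1) := ⟨k, Nat.lt_succ_of_le hk⟩
  calc ∑ i ∈ univ.filter (fun i : Fin n => (i : ℕ) < k), μ i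
      = Module.finrank ℂ (V k') :=
        Fin.sum_filter_val_lt_induction μ (fun j => Module.finrank ℂ (V j)) (by simp [hV0]) hμ k'
    _ ≤ Module.finrank ℂ (LinearMap.ker (f ^ k)) :=
        Submodule.finrank_mono (Submodule.le_ker_pow_of_map_le f V hV0 hX k')
    _ = ∑ i ∈ range k, lam i := 
        (sum_range_induction lam (fun j => Module.finrank ℂ (LinearMap.ker (f ^ j)))
          (by simp [Module.End.one_eq_id]) k fun j _ => hlam j).symm

/-- Let `X` be a nilpotent operator on `ℂᴺ` with `Xⁿ = 0`, and let `λ` be the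
conjugate of its Jordan type, so that `λ₁ + ⋯ + λ_k = dim ker Xᵏ` (here
`lam k = λ_{k+1} = dim ker X^{k+1} − dim ker X^k`).  If there is an `n`-step flag
`0 = V₀ ⊆ ⋯ ⊆ Vₙ = ℂᴺ` with `dim(Vᵢ/Vᵢ₋₁) = μᵢ` and `X Vᵢ ⊆ Vᵢ₋₁`, then for every
`k`, `μ₁ + ⋯ + μ_k ≤ λ₁ + ⋯ + λ_k`. -/
theorem springer_fibre_weight_dominance (n N : ℕ)
    (f : Module.End ℂ (Fin N → ℂ)) (hnil : f ^ n = 0)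
    (lam : ℕ → ℕ)
    (hlam : ∀ k : ℕ, Module.finrank ℂ (LinearMap.ker (f ^ (k + 1))) =
      Module.finrank ℂ (LinearMap.ker (f ^ k)) + lam k)
    (V : Fin (n + 1) → Submodule ℂ (Fin N → ℂ))
    (hV0 : V 0 = ⊥) (hVtop : V (Fin.last n) = ⊤)
    (hchain : ∀ i : Fin n, V i.castSucc ≤ V i.succ)
    (μ : Fin n → ℕ)
    (hμ : ∀ i : Fin n, Module.finrank ℂ (V i.succ) =
      Module.finrank ℂ (V i.castSucc) + μ i)
    (hX : ∀ i : Fin n, Submodule.map f (V i.succ) ≤ V i.castSucc) :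
    ∀ k : ℕ, k ≤ n →
      ∑ i ∈ Finset.univ.filter (fun i : Fin n => (i : ℕ) < k), μ i ≤
        ∑ i ∈ Finset.range k, lam i :=
  springer_fibre_weight_dominance_general n N f lam hlam V hV0 μ hμ hX
end

section
/- Let X be a nilpotent operator on ℂ^N with conjugate Jordan type λ (so λ_k = dim ker X^k − dim ker X^{k−1}). Then there is a unique n-step flag 0 = V_0 ⊆ ⋯ ⊆ V_n = ℂ^N with X V_i ⊆ V_{i−1} and dim(V_i/V_{i−1}) = λ_i for all i, namely V_i = ker(X^i). -/
/-!
Since `ker (X^{i+1}) = X⁻¹(ker Xⁱ)`, the condition `X Vᵢ ⊆ Vᵢ₋₁` together with `V₀ = 0` gives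
`Vᵢ ⊆ ker Xⁱ` by induction. The dimension conditions pin down `dim Vᵢ = dim ker Xⁱ`, so the
inclusions are equalities. Conversely the kernel flag satisfies every condition, `Xⁿ = 0`
giving `ker Xⁿ = ℂᴺ`.
-/

namespace Module.End

variable {R M : Type*} [Semiring R] [AddCommMonoid M] [Module R M]

theorem ker_pow_zero (f : Module.End R M) : LinearMap.ker (f ^ 0) = ⊥ := by
  rw [pow_zero, one_eq_id, LinearMap.ker_id]

theorem ker_pow_succ_eq_comap (f : Module.End R M) (i : ℕ) :
    LinearMap.ker (f ^ (i + 1)) = (LinearMap.ker (f ^ i)).comap f := by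
  rw [pow_succ, mul_eq_comp, LinearMap.ker_comp]

theorem ker_pow_le_ker_pow_succ (f : Module.End R M) (i : ℕ) :
    LinearMap.ker (f ^ i) ≤ LinearMap.ker (f ^ (i + 1)) := by
  rw [pow_succ', mul_eq_comp]
  exact LinearMap.ker_le_ker_comp _ _

theorem map_ker_pow_succ_le (f : Module.End R M) (i : ℕ) :
    (LinearMap.ker (f ^ (i + 1))).map f ≤ LinearMap.ker (f ^ i) :=
  Submodule.map_le_iff_le_comap.mpr (ker_pow_succ_eq_comap f i).le

theorem le_ker_pow_of_map_le {n : ℕ} (f : Module.End R M) (V : Fin (n + 1) → Submodule R M)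
    (h0 : V 0 = ⊥) (hmap : ∀ i : Fin n, (V i.succ).map f ≤ V i.castSucc) (i : Fin (n + 1)) :
    V i ≤ LinearMap.ker (f ^ (i : ℕ)) := by
  induction i using Fin.induction with
  | zero => exact h0 ▸ bot_le
  | succ i ih =>
    rw [Fin.val_succ, ker_pow_succ_eq_comap]
    exact (Submodule.map_le_iff_le_comap.mp (hmap i)).trans (Submodule.comap_mono ih)

end Module.End

theorem Fin.eq_of_zero_eq_of_succ_eq_add {n : ℕ} {a b : Fin (n + 1) → ℕ} (d : Fin n → ℕ)
    (h0 : a 0 = b 0) (ha : ∀ i : Fin n, a i.succ = a i.castSucc + d i)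
    (hb : ∀ i : Fin n, b i.succ = b i.castSucc + d i) : a = b := by
  funext i
  induction i using Fin.induction with
  | zero => exact h0
  | succ i ih => rw [ha, hb, ih]

/-- Let `X` be a nilpotent operator on `ℂᴺ` with `Xⁿ = 0` and conjugate Jordan type
`λ` (so `λ_k = dim ker Xᵏ − dim ker X^{k−1}`; here `lam i = λ_{i+1}`).  Then there
is a unique `n`-step flag `0 = V₀ ⊆ ⋯ ⊆ Vₙ = ℂᴺ` with `X Vᵢ ⊆ Vᵢ₋₁` and
`dim(Vᵢ/Vᵢ₋₁) = λᵢ`, namely `Vᵢ = ker(Xⁱ)`. -/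
theorem springer_fibre_highest_weight_point (n N : ℕ)
    (f : Module.End ℂ (Fin N → ℂ)) (hnil : f ^ n = 0)
    (lam : Fin n → ℕ)
    (hlam : ∀ i : Fin n, Module.finrank ℂ (LinearMap.ker (f ^ ((i : ℕ) + 1))) =
      Module.finrank ℂ (LinearMap.ker (f ^ (i : ℕ))) + lam i) :
    ∀ V : Fin (n + 1) → Submodule ℂ (Fin N → ℂ),
      (V 0 = ⊥ ∧ V (Fin.last n) = ⊤ ∧
        (∀ i : Fin n, V i.castSucc ≤ V i.succ) ∧
        (∀ i : Fin n, Submodule.map f (V i.succ) ≤ V i.castSucc) ∧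
        (∀ i : Fin n, Module.finrank ℂ (V i.succ) =
          Module.finrank ℂ (V i.castSucc) + lam i)) ↔
      V = fun i : Fin (n + 1) => LinearMap.ker (f ^ (i : ℕ)) := by
  intro V
  constructor
  · rintro ⟨h0, -, -, hmap, hdim⟩
    have hrank : (fun i => Module.finrank ℂ (V i)) =
        fun i : Fin (n + 1) => Module.finrank ℂ (LinearMap.ker (f ^ (i : ℕ))) :=
      Fin.eq_of_zero_eq_of_succ_eq_add lam (by rw [h0, Fin.val_zero, Module.End.ker_pow_zero]) hdim hlam
    funext i
    exact Submodule.eq_of_le_of_finrank_eq (Module.End.le_ker_pow_of_map_le f V h0 hmap i)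
      (congrFun hrank i)
  · rintro rfl
    exact ⟨Module.End.ker_pow_zero f, by simp [hnil], fun i => Module.End.ker_pow_le_ker_pow_succ f i,
      fun i => Module.End.map_ker_pow_succ_le f i, hlam⟩
end
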